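/- arXiv:2512.24199 — 3 statements merged into one kernel-verified Lean document; each statement's English description precedes it below -/
import Mathlib

section
/- Under the setup of the homogeneous random walk on H(d,n), each eigenvalue λ_i (i ∈ {1,...,d}) satisfies −1/(n−1) ≤ λ_i ≤ 1, because λ_i = E[(−1/(n−1))^L] for a random variable L supported on {0,...,i} distributed as a mixture of hypergeometric distributions: P(L=l) = Σ_{j=l}^{d+l−i} [C(i,l)C(d−i,j−l)/C(d,j)] w_j. -/
open Finset

/-- The Krawtchouk polynomial `K_j(i)` for the Hamming graph `H(d,n)`. -/
noncomputable def krawtchouk (n d i j : ℕ) : ℝ :=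
  ∑ l ∈ Finset.Icc (max 0 (i + j - d)) (min i j),
    (-1 : ℝ) ^ l * ((n : ℝ) - 1) ^ (i - l) * (Nat.choose j l) * (Nat.choose (d - j) (i - l))

/-- `κ_j = C(d,j)(n-1)^j`. -/
def kappa (n d j : ℕ) : ℕ := Nat.choose d j * (n - 1) ^ j

/-!
Write `a = -1/(n-1)`. Expanding the Krawtchouk sum, `(n-1)^(j-l) / (n-1)^j = (-a)^l`, so
`K_j(i)/κ_j = ∑_l P(L_j = l) a^l`, where `L_j = |S ∩ I|` is hypergeometric: `S` is a uniform
`j`-subset and `I` a fixed `i`-subset of a `d`-set. Averaging over `j` with the weights `w_j` gives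
`λ_i = E[a^L]` for the mixture `L`, whose probabilities sum to one by Vandermonde's identity.
Since `-1 ≤ a ≤ 0`, every `a^l` lies in `[a, 1]`, hence so does their convex combination `λ_i`.
-/

/-- The probability that a uniformly random `j`-subset of a `d`-set meets a fixed `i`-subset
in exactly `l` points. -/
noncomputable def hypergeomProb (d i j l : ℕ) : ℝ :=
  (Nat.choose i l : ℝ) * (Nat.choose (d - i) (j - l)) / (Nat.choose d j)

lemma sum_Icc_choose_mul_choose {d i j : ℕ} (hid : i ≤ d) :
    ∑ l ∈ Icc (max 0 (j + i - d)) (min j i), Nat.choose i l * Nat.choose (d - i) (j - l) =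
      Nat.choose d j := by
  have hvandermonde := Nat.add_choose_eq i (d - i) j
  rw [Nat.add_sub_cancel' hid, Nat.sum_antidiagonal_eq_sum_range_succ_mk] at hvandermonde
  rw [hvandermonde]
  refine sum_subset (fun l hl => ?_) fun l hlj hl => ?_
  · simp only [mem_Icc, mem_range] at hl ⊢
    omega
  · simp only [mem_Icc, mem_range] at hl hlj
    rcases Nat.lt_or_ge i l with h | h
    · rw [Nat.choose_eq_zero_of_lt h, zero_mul]
    · rw [Nat.choose_eq_zero_of_lt (by omega : d - i < j - l), mul_zero]

lemma sum_hypergeomProb {d i j : ℕ} (hid : i ≤ d) (hjd : j ≤ d) :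
    ∑ l ∈ Icc (max 0 (j + i - d)) (min j i), hypergeomProb d i j l = 1 := by
  have hC : (Nat.choose d j : ℝ) ≠ 0 := by exact_mod_cast (Nat.choose_pos hjd).ne'
  simp only [hypergeomProb, ← sum_div]
  rw [div_eq_one_iff_eq hC]
  exact_mod_cast sum_Icc_choose_mul_choose hid

lemma hypergeomProb_nonneg (d i j l : ℕ) : 0 ≤ hypergeomProb d i j l := by
  unfold hypergeomProb
  positivity

lemma krawtchouk_div_kappa {n d i j : ℕ} (hn : 1 < n) :
    krawtchouk n d j i / kappa n d j =
      ∑ l ∈ Icc (max 0 (j + i - d)) (min j i),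
        hypergeomProb d i j l * (-1 / ((n : ℝ) - 1)) ^ l := by
  have hr : (n : ℝ) - 1 ≠ 0 := sub_ne_zero.mpr (by exact_mod_cast hn.ne')
  have hκ : (kappa n d j : ℝ) = Nat.choose d j * ((n : ℝ) - 1) ^ j := by
    simp [kappa, Nat.cast_sub hn.le]
  rw [krawtchouk, hκ, sum_div]
  refine sum_congr rfl fun l hl => ?_
  have hlj : l ≤ j := (mem_Icc.mp hl).2.trans (min_le_left _ _)
  rw [hypergeomProb, div_pow, ← Nat.sub_add_cancel hlj, pow_add, Nat.add_sub_cancel]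
  field_simp

lemma sum_range_sum_Icc_comm {d i : ℕ} (hid : i ≤ d) (F : ℕ → ℕ → ℝ) :
    ∑ j ∈ range (d + 1), ∑ l ∈ Icc (max 0 (j + i - d)) (min j i), F j l =
      ∑ l ∈ range (i + 1), ∑ j ∈ Icc l (d + l - i), F j l :=
  sum_comm' fun j l => by simp only [mem_range, mem_Icc]; omega

noncomputable def hypergeomMixture (d i : ℕ) (w : ℕ → ℝ) (l : ℕ) : ℝ :=
  ∑ j ∈ Icc l (d + l - i), hypergeomProb d i j l * w j

lemma hypergeomMixture_nonneg (d i : ℕ) {w : ℕ → ℝ} (hw : ∀ j, 0 ≤ w j) (l : ℕ) :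
    0 ≤ hypergeomMixture d i w l :=
  sum_nonneg fun j _ => mul_nonneg (hypergeomProb_nonneg d i j l) (hw j)

lemma sum_hypergeomMixture {d i : ℕ} (hid : i ≤ d) (w : ℕ → ℝ) :
    ∑ l ∈ range (i + 1), hypergeomMixture d i w l = ∑ j ∈ range (d + 1), w j := by
  simp only [hypergeomMixture, ← sum_range_sum_Icc_comm hid, ← sum_mul]
  refine sum_congr rfl fun j hj => ?_
  rw [sum_hypergeomProb hid (Nat.lt_succ_iff.mp (mem_range.mp hj)), one_mul]

lemma sum_div_kappa_mul_krawtchouk {n d i : ℕ} (hn : 1 < n) (hid : i ≤ d) (w : ℕ → ℝ) :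
    ∑ j ∈ range (d + 1), w j / (kappa n d j : ℝ) * krawtchouk n d j i =
      ∑ l ∈ range (i + 1), hypergeomMixture d i w l * (-1 / ((n : ℝ) - 1)) ^ l := by
  calc _ = ∑ j ∈ range (d + 1), ∑ l ∈ Icc (max 0 (j + i - d)) (min j i),
        hypergeomProb d i j l * w j * (-1 / ((n : ℝ) - 1)) ^ l :=
        sum_congr rfl fun j _ => by
          rw [div_mul_eq_mul_div, mul_div_assoc, krawtchouk_div_kappa hn, mul_sum]
          exact sum_congr rfl fun l _ => by ring
    _ = _ := by simp only [sum_range_sum_Icc_comm hid, hypergeomMixture, sum_mul]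

lemma pow_mem_Icc_of_mem_Icc_neg_one_zero {a : ℝ} (ha : a ∈ Set.Icc (-1) 0) (l : ℕ) :
    a ^ l ∈ Set.Icc a 1 := by
  have habs : |a| ≤ 1 := abs_le.mpr ⟨ha.1, ha.2.trans zero_le_one⟩
  refine ⟨?_, (le_abs_self _).trans (abs_pow a l ▸ pow_le_one₀ (abs_nonneg a) habs)⟩
  rcases l.eq_zero_or_pos with rfl | hl
  · simpa using ha.2.trans zero_le_one
  · calc a = -|a| := by rw [abs_of_nonpos ha.2, neg_neg]
      _ ≤ -|a ^ l| := by
        rw [abs_pow]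
        exact neg_le_neg (pow_le_of_le_one (abs_nonneg a) habs hl.ne')
      _ ≤ a ^ l := neg_abs_le _

theorem eigenvalue_hypergeometric_mixture_general (n d i : ℕ) (hn : 2 ≤ n)
    (hid : i ≤ d)
    (w : ℕ → ℝ) (hw : ∀ j, 0 ≤ w j) (hw1 : ∑ j ∈ Finset.range (d + 1), w j = 1) :
    (∑ j ∈ Finset.range (d + 1), w j / (kappa n d j : ℝ) * krawtchouk n d j i
        = ∑ l ∈ Finset.range (i + 1),
            (∑ j ∈ Finset.Icc l (d + l - i),
              (Nat.choose i l : ℝ) * (Nat.choose (d - i) (j - l)) / (Nat.choose d j) * w j) *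
            (-1 / ((n : ℝ) - 1)) ^ l)
    ∧ (-1 / ((n : ℝ) - 1)
        ≤ ∑ j ∈ Finset.range (d + 1), w j / (kappa n d j : ℝ) * krawtchouk n d j i)
    ∧ (∑ j ∈ Finset.range (d + 1), w j / (kappa n d j : ℝ) * krawtchouk n d j i ≤ 1) := by
  have heigen := sum_div_kappa_mul_krawtchouk hn hid w
  have hn' : (1 : ℝ) ≤ n - 1 := by
    have : (2 : ℝ) ≤ n := by exact_mod_cast hn
    linarith
  have ha : -1 / ((n : ℝ) - 1) ∈ Set.Icc (-1) 0 :=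
    ⟨by rw [neg_div]; exact neg_le_neg (div_le_one_of_le₀ hn' (by linarith)),
      div_nonpos_of_nonpos_of_nonneg (by norm_num) (by linarith)⟩
  have hmem := (convex_Icc _ 1).sum_mem (fun l _ => hypergeomMixture_nonneg d i hw l)
    ((sum_hypergeomMixture hid w).trans hw1) fun l _ => pow_mem_Icc_of_mem_Icc_neg_one_zero ha l
  exact ⟨heigen, heigen ▸ hmem.1, heigen ▸ hmem.2⟩

theorem eigenvalue_hypergeometric_mixture (n d i : ℕ) (hn : 2 ≤ n) (hd : 2 ≤ d)
    (hi1 : 1 ≤ i) (hid : i ≤ d)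
    (w : ℕ → ℝ) (hw : ∀ j, 0 ≤ w j) (hw1 : ∑ j ∈ Finset.range (d + 1), w j = 1) :
    (∑ j ∈ Finset.range (d + 1), w j / (kappa n d j : ℝ) * krawtchouk n d j i
        = ∑ l ∈ Finset.range (i + 1),
            (∑ j ∈ Finset.Icc l (d + l - i),
              (Nat.choose i l : ℝ) * (Nat.choose (d - i) (j - l)) / (Nat.choose d j) * w j) *
            (-1 / ((n : ℝ) - 1)) ^ l)
    ∧ (-1 / ((n : ℝ) - 1)
        ≤ ∑ j ∈ Finset.range (d + 1), w j / (kappa n d j : ℝ) * krawtchouk n d j i)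
    ∧ (∑ j ∈ Finset.range (d + 1), w j / (kappa n d j : ℝ) * krawtchouk n d j i ≤ 1) :=
  eigenvalue_hypergeometric_mixture_general n d i hn hid w hw hw1
end

section
/- For m > 0 and no boundary, the mean field (1/n^d)Σ_{x∈X} g_x of the Gaussian free field on H(d,n) with Gibbs measure determined by P equals (1/√(n^d β)) Z_0/m in distribution; in particular it is a centred Gaussian with variance 1/(n^d β m²). Hence there is no spontaneous magnetisation. -/
/-! The character sum `∑ₓ ζ^{x·y}` over `(ℤ/n)^d` vanishes unless `y = 0`, so averaging the
Fourier expansion of the field over all sites keeps only its zero mode `Z₀`. The zero mode has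
coefficient `(1/α - λ₀)^{-1/2} = (1 + m² - 1)^{-1/2} = 1/m`, so the mean field is a fixed multiple
of the standard Gaussian `Z₀`, whose law is again a centred Gaussian. -/

open Finset MeasureTheory ProbabilityTheory

/-- The primitive `n`-th root of unity `ζ = e^{2π√-1/n}`. -/
noncomputable def zeta (n : ℕ) : ℂ := Complex.exp (2 * Real.pi * Complex.I / n)

/-- The Hamming weight: number of nonzero coordinates. -/
def wt {n d : ℕ} (y : Fin d → Fin n) : ℕ :=
  (Finset.univ.filter fun j => (y j : ℕ) ≠ 0).card

lemma IsPrimitiveRoot.sum_fin_pow_mul {R : Type*} [CommRing R] [IsDomain R] {ζ : R} {n : ℕ}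
    (hζ : IsPrimitiveRoot ζ n) (j : Fin n) :
    ∑ k : Fin n, ζ ^ ((k : ℕ) * j) = if (j : ℕ) = 0 then (n : R) else 0 := by
  split_ifs with hj
  · simp [hj]
  have hne : ζ ^ (j : ℕ) ≠ 1 := hζ.pow_ne_one_of_pos_of_lt hj j.isLt
  have hpow : (ζ ^ (j : ℕ)) ^ n = 1 := by rw [← pow_mul, mul_comm, pow_mul, hζ.pow_eq_one, one_pow]
  have hgeom := geom_sum_mul (ζ ^ (j : ℕ)) n
  rw [hpow, sub_self, mul_eq_zero, or_iff_left (sub_ne_zero.mpr hne)] at hgeom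
  rw [Fin.sum_univ_eq_sum_range (fun k => ζ ^ (k * (j : ℕ))), ← hgeom]
  exact sum_congr rfl fun k _ => by rw [← pow_mul, mul_comm]

lemma zeta_isPrimitiveRoot {n : ℕ} (hn : 0 < n) : IsPrimitiveRoot (zeta n) n := by
  simpa [zeta, mul_comm, mul_div_assoc, mul_assoc] using Complex.isPrimitiveRoot_exp n hn.ne'

lemma sum_zeta_pow_sum_mul {ι : Type*} [Fintype ι] [DecidableEq ι] {n : ℕ} (y : ι → Fin n) :
    ∑ x : ι → Fin n, zeta n ^ (∑ j, (x j : ℕ) * (y j : ℕ))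
      = if ∀ j, (y j : ℕ) = 0 then (n : ℂ) ^ Fintype.card ι else 0 := by
  simp_rw [← prod_pow_eq_pow_sum]
  rw [← Fintype.prod_sum fun i (k : Fin n) => zeta n ^ ((k : ℕ) * y i)]
  simp_rw [fun j => (zeta_isPrimitiveRoot (y j).pos).sum_fin_pow_mul (y j)]
  split_ifs with hy
  · simp [hy]
  · obtain ⟨j, hj⟩ := not_forall.mp hy
    exact prod_eq_zero (mem_univ j) (if_neg hj)

lemma sum_sum_mul_zeta_pow {ι : Type*} [Fintype ι] [DecidableEq ι] {n : ℕ}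
    (c : (ι → Fin n) → ℂ) (y₀ : ι → Fin n) (hy₀ : ∀ j, (y₀ j : ℕ) = 0) :
    ∑ x : ι → Fin n, ∑ y, c y * zeta n ^ (∑ j, (x j : ℕ) * (y j : ℕ))
      = (n : ℂ) ^ Fintype.card ι * c y₀ := by
  rw [sum_comm]
  simp_rw [← mul_sum, sum_zeta_pow_sum_mul]
  rw [sum_eq_single y₀ (fun y _ hy => ?_) (by simp), if_pos hy₀, mul_comm]
  rw [if_neg fun h => hy (funext fun j => Fin.ext (by rw [h j, hy₀ j])), mul_zero]

lemma wt_eq_zero_iff {n d : ℕ} {y : Fin d → Fin n} : wt y = 0 ↔ ∀ j, (y j : ℕ) = 0 := by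
  simp [wt, filter_eq_empty_iff]

theorem no_spontaneous_magnetisation_general (n d : ℕ)
    (β m α : ℝ) (hβ : 0 < β) (hm : 0 < m) (hα : α = 1 / (1 + m ^ 2))
    (lam : ℕ → ℝ) (hlam0 : lam 0 = 1)
    (Ω : Type*) [MeasureSpace Ω] (μ : Measure Ω)
    (Z : (Fin d → Fin n) → Ω → ℝ)
    (x₀ : Fin d → Fin n) (hx₀ : ∀ j, (x₀ j : ℕ) = 0)
    (hgauss : μ.map (Z x₀) = gaussianReal 0 1)
    (g : (Fin d → Fin n) → Ω → ℂ)
    (hg : ∀ x ω, g x ω = (1 / Real.sqrt β) *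
        ∑ y : Fin d → Fin n,
          (Z y ω : ℂ) / Real.sqrt (1 / α - lam (wt y)) *
            (zeta n ^ (∑ j, (x j : ℕ) * (y j : ℕ)) / Real.sqrt ((n : ℝ) ^ d))) :
    (∀ ω, (1 / (n : ℂ) ^ d) * ∑ x : Fin d → Fin n, g x ω
        = ((1 / (m * Real.sqrt ((n : ℝ) ^ d * β)) * Z x₀ ω : ℝ) : ℂ))
    ∧ μ.map (fun ω => 1 / (m * Real.sqrt ((n : ℝ) ^ d * β)) * Z x₀ ω)
        = gaussianReal 0 (Real.toNNReal (1 / ((n : ℝ) ^ d * β * m ^ 2))) := by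
  have hnd : (0 : ℝ) < (n : ℝ) ^ d := by
    exact_mod_cast (by simpa using Fintype.card_pos_iff.mpr ⟨x₀⟩ : 0 < n ^ d)
  have hzero_mode : Real.sqrt (1 / α - lam (wt x₀)) = m := by
    rw [wt_eq_zero_iff.mpr hx₀, hlam0, hα, one_div_one_div, add_sub_cancel_left,
      Real.sqrt_sq hm.le]
  refine ⟨fun ω => ?_, ?_⟩
  · set c : (Fin d → Fin n) → ℂ := fun y => (Z y ω : ℂ) /
      (Real.sqrt β * Real.sqrt (1 / α - lam (wt y)) * Real.sqrt ((n : ℝ) ^ d))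
    have hexpand : ∀ x, g x ω = ∑ y, c y * zeta n ^ (∑ j, (x j : ℕ) * (y j : ℕ)) := fun x => by
      rw [hg, mul_sum]
      exact sum_congr rfl fun y _ => by ring
    rw [sum_congr rfl fun x _ => hexpand x, sum_sum_mul_zeta_pow c x₀ hx₀, Fintype.card_fin,
      ← mul_assoc, one_div_mul_cancel (by exact_mod_cast hnd.ne'), one_mul]
    simp only [c, hzero_mode, Real.sqrt_mul hnd.le]
    push_cast
    ring
  · have hZ : HasLaw (Z x₀) (gaussianReal 0 1) μ :=
      ⟨.of_map_ne_zero (by simp [hgauss, NeZero.ne]), hgauss⟩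
    rw [(gaussianReal_const_mul hZ _).map_eq]
    congr 1
    · ring
    · ext
      rw [NNReal.coe_mul, NNReal.coe_one, mul_one, Real.coe_toNNReal _ (by positivity),
        NNReal.coe_mk, div_pow, one_pow, mul_pow, Real.sq_sqrt (by positivity)]
      ring

theorem no_spontaneous_magnetisation (n d : ℕ) (hn : 2 ≤ n) (hd : 2 ≤ d)
    (β m α : ℝ) (hβ : 0 < β) (hm : 0 < m) (hα : α = 1 / (1 + m ^ 2))
    (lam : ℕ → ℝ) (hlam0 : lam 0 = 1)
    (Ω : Type*) [MeasureSpace Ω] (μ : Measure Ω) [IsProbabilityMeasure μ]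
    (Z : (Fin d → Fin n) → Ω → ℝ) (hmeas : ∀ y, Measurable (Z y))
    (x₀ : Fin d → Fin n) (hx₀ : ∀ j, (x₀ j : ℕ) = 0)
    (hgauss : μ.map (Z x₀) = gaussianReal 0 1)
    (g : (Fin d → Fin n) → Ω → ℂ)
    (hg : ∀ x ω, g x ω = (1 / Real.sqrt β) *
        ∑ y : Fin d → Fin n,
          (Z y ω : ℂ) / Real.sqrt (1 / α - lam (wt y)) *
            (zeta n ^ (∑ j, (x j : ℕ) * (y j : ℕ)) / Real.sqrt ((n : ℝ) ^ d))) :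
    (∀ ω, (1 / (n : ℂ) ^ d) * ∑ x : Fin d → Fin n, g x ω
        = ((1 / (m * Real.sqrt ((n : ℝ) ^ d * β)) * Z x₀ ω : ℝ) : ℂ))
    ∧ μ.map (fun ω => 1 / (m * Real.sqrt ((n : ℝ) ^ d * β)) * Z x₀ ω)
        = gaussianReal 0 (Real.toNNReal (1 / ((n : ℝ) ^ d * β * m ^ 2))) :=
  no_spontaneous_magnetisation_general n d β m α hβ hm hα lam hlam0 Ω μ Z x₀ hx₀ hgauss g hg
end

section
/- For the simple random walk on H(d,n) (nearest-neighbour, eigenvalues λ_i = 1 − ni/((n−1)d)) killed at the boundary ∂_r, the probability p_1 that the walk starting at distance 1 from the origin hits ∂_r before returning to the origin satisfies p_1^{-1} = Σ_{i=0}^r C(d−1,i)^{-1} (n−1)^{-i}; hence the Green function at the origin equals G_{1,∂_r}(0,0) = Σ_{i=0}^r C(d−1,i)^{-1}(n−1)^{-i}. Equivalently, the solution of the recurrence p_{x+1} − p_x = [x/((d−x)(n−1))](p_x − p_{x−1}) for x = 1,...,r with p_0 = 0, p_{r+1} = 1 satisfies p_1 = (Σ_{i=0}^r C(d−1,i)^{-1}(n−1)^{-i})^{-1}.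 -/
/-!
Write `a x = p (x + 1) - p x`. The recurrence multiplies `a (x - 1)` by `x / ((d - x) (n - 1))`,
which is exactly the ratio `C(d-1, x-1) / (C(d-1, x) (n - 1))`, so
`a x = p 1 / (C(d-1, x) (n - 1)^x)`. Summing the increments telescopes to `p (r + 1) - p 0 = 1`,
which determines `p 1`.
-/

open Finset

variable {K : Type*} [Field K] [CharZero K]

theorem Nat.cast_choose_succ_inv {m k : ℕ} (hk : k < m) :
    ((m.choose (k + 1) : K))⁻¹ = (k + 1) / ((m : K) - k) * ((m.choose k : K))⁻¹ := by
  have hchoose : (m.choose (k + 1) : K) * (k + 1) = m.choose k * ((m : K) - k) := by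
    rw [← Nat.cast_sub hk.le]
    exact_mod_cast Nat.choose_succ_right_eq m k
  have hmk : (m : K) - k ≠ 0 := sub_ne_zero.mpr (by exact_mod_cast hk.ne')
  have hc : (m.choose k : K) ≠ 0 := by exact_mod_cast (Nat.choose_pos hk.le).ne'
  have hc' : (m.choose (k + 1) : K) ≠ 0 := by exact_mod_cast (Nat.choose_pos hk).ne'
  field_simp
  linear_combination -hchoose

theorem sub_eq_of_choose_recurrence {p : ℕ → K} {c : K} {d r : ℕ} (hrd : r ≤ d - 1)
    (hrec : ∀ x, 1 ≤ x → x ≤ r →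
      p (x + 1) - p x = (x : K) / (((d : K) - x) * c) * (p x - p (x - 1))) :
    ∀ x ≤ r, p (x + 1) - p x = (p 1 - p 0) * (((d - 1).choose x : K) * c ^ x)⁻¹ := by
  intro x
  induction x with
  | zero => simp
  | succ x ih =>
    intro hx
    have hxd : x < d - 1 := by omega
    have hcast : (d : K) - (x + 1 : ℕ) = ((d - 1 : ℕ) : K) - x := by
      rw [Nat.cast_pred (by omega)]
      push_cast
      ring
    rw [hrec (x + 1) x.succ_pos hx, Nat.add_sub_cancel, ih (Nat.le_of_succ_le hx), hcast,
      mul_inv, mul_inv, Nat.cast_choose_succ_inv hxd, pow_succ, mul_inv]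
    push_cast
    field_simp

theorem sub_eq_mul_sum_of_choose_recurrence {p : ℕ → K} {c : K} {d r : ℕ} (hrd : r ≤ d - 1)
    (hrec : ∀ x, 1 ≤ x → x ≤ r →
      p (x + 1) - p x = (x : K) / (((d : K) - x) * c) * (p x - p (x - 1))) :
    p (r + 1) - p 0 =
      (p 1 - p 0) * ∑ i ∈ range (r + 1), (((d - 1).choose i : K) * c ^ i)⁻¹ := by
  rw [← sum_range_sub, mul_sum]
  exact sum_congr rfl fun x hx ↦
    sub_eq_of_choose_recurrence hrd hrec x (Nat.lt_succ_iff.mp (mem_range.mp hx))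

theorem gambler_ruin_simple_walk_general (n d r : ℕ) (hrd : r ≤ d - 1)
    (p : ℕ → ℝ) (hp0 : p 0 = 0) (hpr : p (r + 1) = 1)
    (hrec : ∀ x, 1 ≤ x → x ≤ r →
      p (x + 1) - p x = (x : ℝ) / (((d : ℝ) - x) * ((n : ℝ) - 1)) * (p x - p (x - 1))) :
    p 1 = (∑ i ∈ Finset.range (r + 1),
        ((Nat.choose (d - 1) i : ℝ) * ((n : ℝ) - 1) ^ i)⁻¹)⁻¹ := by
  have h := sub_eq_mul_sum_of_choose_recurrence hrd hrec
  rw [hp0, hpr, sub_zero, sub_zero] at h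
  exact eq_inv_of_mul_eq_one_left h.symm

theorem gambler_ruin_simple_walk (n d r : ℕ) (hn : 2 ≤ n) (hd : 2 ≤ d)
    (hr1 : 1 ≤ r) (hrd : r ≤ d - 1)
    (p : ℕ → ℝ) (hp0 : p 0 = 0) (hpr : p (r + 1) = 1)
    (hrec : ∀ x, 1 ≤ x → x ≤ r →
      p (x + 1) - p x = (x : ℝ) / (((d : ℝ) - x) * ((n : ℝ) - 1)) * (p x - p (x - 1))) :
    p 1 = (∑ i ∈ Finset.range (r + 1),
        ((Nat.choose (d - 1) i : ℝ) * ((n : ℝ) - 1) ^ i)⁻¹)⁻¹ :=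
  gambler_ruin_simple_walk_general n d r hrd p hp0 hpr hrec
end
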